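/- Let η ≥ 1 be a countable ordinal and C a nonempty clopen subset of 2^ω. Then 𝕊^η_0 ∩ C² is not separable from 𝕊^η_1 ∩ C² by a pot(Δ(D_η(Σ^0_1))) set. -/

import Mathlib

open Set Function

abbrev Cantor : Type := ℕ → Bool
abbrev Baire : Type := ℕ → ℕ

abbrev SetClass : Type 1 := (Z : Type) → TopologicalSpace Z → Set Z → Prop

/-- `S` is a Borel subset of `Z`. -/
def IsBorel {Z : Type} [TopologicalSpace Z] (S : Set Z) : Prop :=
  @MeasurableSet Z (borel Z) S

/-- the inverse `A⁻¹` of a relation. -/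
def relInv {X : Type} (A : Set (X × X)) : Set (X × X) := {p | (p.2, p.1) ∈ A}

/-- the symmetrization `s(A) = A ∪ A⁻¹` of a relation. -/
def symmRel {X : Type} (A : Set (X × X)) : Set (X × X) := A ∪ relInv A

def IsIrreflRel {X : Type} (A : Set (X × X)) : Prop := ∀ x : X, (x, x) ∉ A

def IsAntisymmRel {X : Type} (A : Set (X × X)) : Prop :=
  ∀ x y : X, (x, y) ∈ A → (y, x) ∈ A → x = y

/-- an oriented graph is an irreflexive antisymmetric relation. -/
def IsOrientedGraph {X : Type} (A : Set (X × X)) : Prop := IsIrreflRel A ∧ IsAntisymmRel A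

/-- a relation is acyclic if there is no injective sequence `(x_i)_{i ≤ n}` with `n ≥ 2`,
`(x_i, x_{i+1}) ∈ A` for `i < n` and `(x_n, x_0) ∈ A`. -/
def AcyclicRel {X : Type} (A : Set (X × X)) : Prop :=
  ¬ ∃ (n : ℕ) (x : ℕ → X), 2 ≤ n ∧ (∀ i j, i ≤ n → j ≤ n → x i = x j → i = j) ∧
      (∀ i, i < n → (x i, x (i + 1)) ∈ A) ∧ (x n, x 0) ∈ A

/-- `A` is s-acyclic if `s(A)` is acyclic. -/
def SAcyclic {X : Type} (A : Set (X × X)) : Prop := AcyclicRel (symmRel A)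

/-- a set is locally countable if all of its vertical and horizontal sections are countable. -/
def LocallyCountable {X Y : Type} (A : Set (X × Y)) : Prop :=
  (∀ x : X, {y : Y | (x, y) ∈ A}.Countable) ∧ (∀ y : Y, {x : X | (x, y) ∈ A}.Countable)

/-- a space is zero-dimensional if it has a neighborhood basis of clopen sets. -/
def ZeroDimensional (Z : Type) [TopologicalSpace Z] : Prop :=
  ∀ x : Z, ∀ U ∈ nhds x, ∃ V : Set Z, IsClopen V ∧ x ∈ V ∧ V ⊆ U

/-- `B ⊆ X × Y` is potentially in the class `Γ`: there are finer Polish topologies on `X` and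
on `Y` for which `B` belongs to `Γ` computed in the corresponding product space. -/
def Potentially (Γ : SetClass) {X Y : Type} [tX : TopologicalSpace X] [tY : TopologicalSpace Y]
    (B : Set (X × Y)) : Prop :=
  ∃ (σ : TopologicalSpace X) (τ : TopologicalSpace Y),
    σ ≤ tX ∧ τ ≤ tY ∧ @PolishSpace X σ ∧ @PolishSpace Y τ ∧
      Γ (X × Y) (@instTopologicalSpaceProd X Y σ τ) B

/-- `A` is separable from `B` by a `pot(Γ)` set. -/
def SepPot (Γ : SetClass) {X Y : Type} [TopologicalSpace X] [TopologicalSpace Y]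
    (A B : Set (X × Y)) : Prop :=
  ∃ S : Set (X × Y), Potentially Γ S ∧ A ⊆ S ∧ Disjoint S B

def openClass : SetClass := fun Z t S => @IsOpen Z t S

def closedClass : SetClass := fun Z t S => @IsClosed Z t S

/-- the class `Σ^0_2` of countable unions of closed sets. -/
def sigma02Class : SetClass := fun Z t S =>
  ∃ F : ℕ → Set Z, (∀ n, @IsClosed Z t (F n)) ∧ S = ⋃ n, F n

/-- the class `Π^0_2` of countable intersections of open sets. -/
def pi02Class : SetClass := fun Z t S =>
  ∃ U : ℕ → Set Z, (∀ n, @IsOpen Z t (U n)) ∧ S = ⋂ n, U n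

/-- the class `Δ^0_2 = Σ^0_2 ∩ Π^0_2`. -/
def delta02Class : SetClass := fun Z t S => sigma02Class Z t S ∧ pi02Class Z t S

/-- the dual class `Ď` of complements of sets in `Γ`. -/
def dualClass (Γ : SetClass) : SetClass := fun Z t S => Γ Z t Sᶜ

def interClass (Γ Γ' : SetClass) : SetClass := fun Z t S => Γ Z t S ∧ Γ' Z t S

/-- standard parity of an ordinal: the parity of its finite part. -/
def OrdEven (o : Ordinal.{0}) : Prop := Even (o % Ordinal.omega0)

/-- the difference set `D((O_θ)_{θ<η})`. -/
def DiffSet {Z : Type} (η : Ordinal.{0}) (O : Ordinal.{0} → Set Z) : Set Z :=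
  {x | ∃ θ, θ < η ∧ (OrdEven θ ↔ ¬ OrdEven η) ∧ x ∈ O θ ∧ ∀ θ', θ' < θ → x ∉ O θ'}

/-- the class `D_η(Γ)` of `η`-differences of increasing sequences of sets in `Γ`. -/
def DClass (η : Ordinal.{0}) (Γ : SetClass) : SetClass := fun Z t S =>
  ∃ O : Ordinal.{0} → Set Z, (∀ θ, θ < η → Γ Z t (O θ)) ∧
    (∀ θ₁ θ₂, θ₁ ≤ θ₂ → θ₂ < η → O θ₁ ⊆ O θ₂) ∧ S = DiffSet η O

/-- choice between a relation and its inverse. -/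
def cSel {X : Type} (b : Bool) (C : Set (X × X)) : Set (X × X) :=
  if b then C else relInv C

/-- quasi-acyclicity of a relation on a Polish space. -/
def QuasiAcyclic {X : Type} [TopologicalSpace X] (A : Set (X × X)) : Prop :=
  ∃ C : ℕ → Set (X × X),
    (∀ n, Potentially closedClass (C n)) ∧
    (∀ m n, m ≠ n → Disjoint (C m) (C n)) ∧
    (⋃ n, C n) = A ∧
    ∀ z₀ z₁ z₂ : X, (z₀, z₁) ∈ symmRel A → (z₁, z₂) ∈ symmRel A → z₀ ≠ z₂ →
      ∀ (k : ℕ) (nn : ℕ → ℕ) (ε : ℕ → Bool) (x y : ℕ → X), 1 ≤ k →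
        (∀ i, 1 ≤ i → i ≤ k →
          x i ≠ z₀ ∧ x i ≠ z₁ ∧ x i ≠ z₂ ∧ y i ≠ z₀ ∧ y i ≠ z₁ ∧ y i ≠ z₂) →
        (z₀, x 1) ∈ cSel (ε 1) (C (nn 1)) →
        (z₂, y 1) ∈ cSel (ε 1) (C (nn 1)) →
        (∀ i, 2 ≤ i → i ≤ k →
          (x (i - 1), x i) ∈ cSel (ε i) (C (nn i)) ∧
          (y (i - 1), y i) ∈ cSel (ε i) (C (nn i))) →
        x k ≠ y k

/-- `(X, Y, A, B) ⊑ (X', Y', A', B')` : reduction by a pair of injective continuous maps. -/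
def Reducible {X Y X' Y' : Type} [TopologicalSpace X] [TopologicalSpace Y]
    [TopologicalSpace X'] [TopologicalSpace Y']
    (A B : Set (X × Y)) (A' B' : Set (X' × Y')) : Prop :=
  ∃ (f : X → X') (g : Y → Y'), Continuous f ∧ Continuous g ∧
    Function.Injective f ∧ Function.Injective g ∧
    (∀ p ∈ A, (f p.1, g p.2) ∈ A') ∧ (∀ p ∈ B, (f p.1, g p.2) ∈ B')

/-- reduction via a square map `f × f`. -/
def SqReducible {X X' : Type} [TopologicalSpace X] [TopologicalSpace X']
    (A B : Set (X × X)) (A' B' : Set (X' × X')) : Prop :=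
  ∃ f : X → X', Continuous f ∧ Function.Injective f ∧
    (∀ p ∈ A, (f p.1, f p.2) ∈ A') ∧ (∀ p ∈ B, (f p.1, f p.2) ∈ B')

/-- a set is `K_σ` if it is a countable union of compact sets. -/
def IsKSigma {Z : Type} [TopologicalSpace Z] (S : Set Z) : Prop :=
  ∃ K : ℕ → Set Z, (∀ n, IsCompact (K n)) ∧ S = ⋃ n, K n

/-- Wadge classes of Borel sets. -/
def IsWadgeClassOfBorel (Γ : SetClass) : Prop :=
  ∃ A : Set Baire, IsBorel A ∧
    ∀ (Z : Type) [tZ : TopologicalSpace Z], PolishSpace Z → ZeroDimensional Z →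
      ∀ S : Set Z, (Γ Z tZ S ↔ ∃ f : Z → Baire, Continuous f ∧ S = f ⁻¹' A)

/-- the Borel classes `Σ^0_ξ`, `ξ ≥ 1`. -/
inductive IsSigma0 : Ordinal.{0} → (Z : Type) → TopologicalSpace Z → Set Z → Prop
  | base (Z : Type) (t : TopologicalSpace Z) (S : Set Z) :
      @IsOpen Z t S → IsSigma0 1 Z t S
  | iUnion (Z : Type) (t : TopologicalSpace Z) (ξ : Ordinal.{0}) (o : ℕ → Ordinal.{0})
      (f : ℕ → Set Z) : 1 < ξ → (∀ n, (1 : Ordinal.{0}) ≤ o n) → (∀ n, o n < ξ) →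
      (∀ n, IsSigma0 (o n) Z t (f n)ᶜ) → IsSigma0 ξ Z t (⋃ n, f n)

/-- the family of classes `D_η(Σ^0_1)`, `Ď_η(Σ^0_1)` (`1 ≤ η < ω₁`), `D_n(Σ^0_2)`,
`Ď_n(Σ^0_2)` (`1 ≤ n < ω`) and `Δ^0_2`. -/
def GammaFamily (Γ : SetClass) : Prop :=
  (∃ η : Ordinal.{0}, 1 ≤ η ∧ η.card ≤ Cardinal.aleph0 ∧ Γ = DClass η openClass) ∨
  (∃ η : Ordinal.{0}, 1 ≤ η ∧ η.card ≤ Cardinal.aleph0 ∧ Γ = dualClass (DClass η openClass)) ∨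
  (∃ n : ℕ, 1 ≤ n ∧ Γ = DClass (n : Ordinal.{0}) sigma02Class) ∨
  (∃ n : ℕ, 1 ≤ n ∧ Γ = dualClass (DClass (n : Ordinal.{0}) sigma02Class)) ∨
  Γ = delta02Class

/-- specification of the map `φ_η : ω^{<ω} → {-1} ∪ (η+1)`, where `none` codes `-1`. -/
def PhiSpec (η : Ordinal.{0}) (φ : List ℕ → Option Ordinal.{0}) : Prop :=
  φ [] = some η ∧
  (∀ s o, φ s = some o → o ≤ η) ∧
  (∀ s n, φ s = none → φ (s ++ [n]) = none) ∧
  (∀ s n, φ s = some 0 → φ (s ++ [n]) = none) ∧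
  (∀ s θ n, φ s = some (θ + 1) → φ (s ++ [n]) = some θ) ∧
  (∀ s o, φ s = some o → Order.IsSuccLimit o →
    ∃ θf : ℕ → Ordinal.{0}, (∀ n, φ (s ++ [n]) = some (θf n)) ∧ StrictMono θf ∧
      (∀ n, ¬ OrdEven (θf n)) ∧ ∀ β, β < o → ∃ n, β ≤ θf n)

/-- the prime coding `I(s) = p_0^{s(0)+1} ⋯ p_{|s|-1}^{s(|s|-1)+1}`, `I(∅) = 0`. -/
noncomputable def Ifun (s : List ℕ) : ℕ :=
  if s = [] then 0
  else ∏ i ∈ Finset.range s.length, (Nat.nth Nat.Prime i) ^ (s.getD i 0 + 1)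

/-- the bijection `⟨·⟩_η : T_η → ω`, increasing with respect to `I`. -/
noncomputable def cEnum (φ : List ℕ → Option Ordinal.{0}) (s : List ℕ) : ℕ :=
  Nat.card {t : List ℕ // φ t ≠ none ∧ Ifun t < Ifun s}

/-- the length-lexicographic enumeration `∅, 0, 1, 00, 01, 10, 11, …` of `2^{<ω}`. -/
def lexEnum (n : ℕ) : List Bool := ((n + 1).bits).dropLast.reverse

/-- the map `ψ` enumerating `∅, ∅, 0, 0, 1, 1, 00, 00, 01, 01, …`. -/
def psiFun (q : ℕ) : List Bool := lexEnum (q / 2)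

noncomputable def tAux (φ : List ℕ → Option Ordinal.{0}) (ε : Bool) : List ℕ → List Bool
  | [] => []
  | q :: r =>
      tAux φ ε r ++ psiFun q ++
        List.replicate
          (cEnum φ (r.reverse ++ [q]) - cEnum φ r.reverse - (psiFun q).length - 1) false ++
        [ε]

/-- the sequences `t^ε_s` for `s ∈ T_η`. -/
noncomputable def tSeq (φ : List ℕ → Option Ordinal.{0}) (ε : Bool) (s : List ℕ) : List Bool :=
  tAux φ ε s.reverse

/-- the concatenation `u ⌢ γ ∈ 2^ω` of a finite sequence with an infinite one. -/
def appendSeq (u : List Bool) (γ : Cantor) : Cantor :=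
  fun n => if n < u.length then u.getD n false else γ (n - u.length)

/-- the sets `ℕ^η_ε = {(t^0_s ⌢ γ, t^1_s ⌢ γ) | s ∈ T_η, parity(|s|) = ε}`,
where `ε = false` codes `0` and `ε = true` codes `1`. -/
noncomputable def NNset (φ : List ℕ → Option Ordinal.{0}) (ε : Bool) : Set (Cantor × Cantor) :=
  {p | ∃ (s : List ℕ) (γ : Cantor), φ s ≠ none ∧ (Even s.length ↔ ε = false) ∧
      p.1 = appendSeq (tSeq φ false s) γ ∧ p.2 = appendSeq (tSeq φ true s) γ}

/-- the sets `𝕊^η_ε = {(t^0_s ⌢ γ, t^1_s ⌢ γ) | s ∈ T_η \ {∅},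
parity(|s|) = 1 - |parity(s(0)) - ε|}`. -/
noncomputable def SSset (φ : List ℕ → Option Ordinal.{0}) (ε : Bool) : Set (Cantor × Cantor) :=
  {p | ∃ (s : List ℕ) (γ : Cantor), φ s ≠ none ∧ s ≠ [] ∧
      ((¬ Even s.length) ↔ (Even (s.headD 0) ↔ ε = false)) ∧
      p.1 = appendSeq (tSeq φ false s) γ ∧ p.2 = appendSeq (tSeq φ true s) γ}

/-- prepending a digit to an element of the Cantor space. -/
def consSeq (b : Bool) (α : Cantor) : Cantor := fun n => if n = 0 then b else α (n - 1)

/-- the relation `{(0⌢α, 1⌢β) | (α, β) ∈ A}`. -/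
def prep01 (A : Set (Cantor × Cantor)) : Set (Cantor × Cantor) :=
  {p | ∃ q ∈ A, p.1 = consSeq false q.1 ∧ p.2 = consSeq true q.2}

/-- the sets `𝔹^η_ε = {(0⌢α, 1⌢β) | (α, β) ∈ ℕ^η_ε}`. -/
noncomputable def BBset (φ : List ℕ → Option Ordinal.{0}) (ε : Bool) : Set (Cantor × Cantor) :=
  prep01 (NNset φ ε)

/-- the sets `ℂ^η_ε = {(0⌢α, 1⌢β) | (α, β) ∈ 𝕊^η_ε}`. -/
noncomputable def CCset (φ : List ℕ → Option Ordinal.{0}) (ε : Bool) : Set (Cantor × Cantor) :=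
  prep01 (SSset φ ε)

/-- the initial segment `α | l` of `α ∈ 2^ω`. -/
def listInit (α : Cantor) (l : ℕ) : List Bool := (List.range l).map α

/-- frames, generating trees on `2 × 2`. -/
def IsFrame (F : ℕ → List Bool × List Bool) : Prop :=
  (∀ l : ℕ, (F l).1.length = l ∧ (F l).2.length = l) ∧
  (∀ p q : ℕ, ∀ w : List Bool, ∃ N : ℕ,
      (∃ l : ℕ, F l =
        ((F q).1 ++ false :: (w ++ List.replicate N false),
         (F q).2 ++ true :: (w ++ List.replicate N false))) ∧
      (((F q).1.length + 1 + w.length + N) - 1).unpair.1 = p) ∧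
  (∀ l : ℕ, 0 < l → ∃ q : ℕ, q < l ∧ ∃ w : List Bool,
      (F l).1 = (F q).1 ++ false :: w ∧ (F l).2 = (F q).2 ++ true :: w)

/-- the tree on `2 × 2` generated by a frame. -/
def frameTree (F : ℕ → List Bool × List Bool) : Set (List Bool × List Bool) :=
  {p | p.1.length = p.2.length ∧
      (p.1 = [] ∨ ∃ (q : ℕ) (w : List Bool),
        p.1 = (F q).1 ++ false :: w ∧ p.2 = (F q).2 ++ true :: w)}

/-- the body `⌈T⌉` of a tree on `2 × 2`. -/
def treeBody (T : Set (List Bool × List Bool)) : Set (Cantor × Cantor) :=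
  {p | ∀ l : ℕ, (listInit p.1 l, listInit p.2 l) ∈ T}

/-- the equivalence relation `𝔼_0` of eventual agreement. -/
def E0rel : Set (Cantor × Cantor) := {p | ∃ m : ℕ, ∀ n, m < n → p.1 n = p.2 n}

/-- the sets `𝔼^ε_0`. -/
def E0par (ε : ℕ) : Set (Cantor × Cantor) :=
  {p | ∃ m : ℕ, 0 < m ∧ p.1 m ≠ p.2 m ∧ (∀ n, m < n → p.1 n = p.2 n) ∧
      (m - 1).unpair.1 % 2 = ε}

/-- the shift map `S : 2^ω → 2^ω`. -/
def shiftSeq (α : Cantor) : Cantor := fun m => α (m + 1)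

/-- the symmetric difference of two elements of `2^ω`. -/
def xorSeq (α β : Cantor) : Cantor := fun m => xor (α m) (β m)

/-- the set `C_0` of eventually null sequences. -/
def Czero : Set Cantor := {α | ∃ m : ℕ, ∀ p, m ≤ p → α p = false}

/-- the sets `C_θ` built from a surjection `S` onto `η`. -/
def CTheta (S : ℕ → Ordinal.{0}) : Ordinal.{0} → Set Cantor := fun θ =>
  if θ = 0 then Czero
  else {α | ∃ m : ℕ, (∀ p : ℕ, α (Nat.pair m p) = false) ∧ S (Nat.unpair m).1 ≤ θ}

/-- the set `D_η = D((C_θ)_{θ<η})`. -/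
def DEtaSet (η : Ordinal.{0}) (S : ℕ → Ordinal.{0}) : Set Cantor := DiffSet η (CTheta S)

/-- the set `ℕ_n = {(α, β) ∈ ⌈T⌉ | S(α Δ β) ∉ D_n}`. -/
def NDn (F : ℕ → List Bool × List Bool) (n : ℕ) (Sn : ℕ → ℕ) : Set (Cantor × Cantor) :=
  {p | p ∈ treeBody (frameTree F) ∧
      shiftSeq (xorSeq p.1 p.2) ∉ DEtaSet (n : Ordinal.{0}) (fun m => (Sn m : Ordinal.{0}))}

/-! Suppose `S` separates the two sets and both `S` and `Sᶜ` are `D_η(Σ⁰₁)` for finer Polish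
topologies. By the Baire property, on a comeager square `G × G` the open sets witnessing this
agree with sets `U b θ` open in `2^ω × 2^ω`. For a generic pair of `𝕊^η_0 ∪ 𝕊^η_1` in `C × C`,
the parity of the least `θ` with the pair in `U b θ` is then determined by the side of the pair.
The pairs at a child of a node `s` lie on the other side and come arbitrarily close to the pairs
at `s`, so by induction on `θ` no pair at `s` reaches a level below `φ_η(s)`. At the root this is
contradicted by a generic diagonal point `(x, x)`, approached by the pairs at children `[n]` of
either side. -/

open PiNat Topology

section LexEnum

lemma lexEnum_snoc (m : ℕ) (b : Bool) : lexEnum (2 * m + 1 + b.toNat) = lexEnum m ++ [b] := by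
  have hbits : (2 * m + 1 + b.toNat + 1).bits = b :: (m + 1).bits := by
    cases b
    · rw [show 2 * m + 1 + false.toNat + 1 = 2 * (m + 1) by simp; omega, Nat.bit0_bits _ (by omega)]
    · rw [show 2 * m + 1 + true.toNat + 1 = 2 * (m + 1) + 1 by simp; omega, Nat.bit1_bits]
  have hne : (m + 1).bits ≠ [] := by
    rw [← List.length_pos_iff, Nat.size_eq_bits_len, Nat.size_pos]
    omega
  rw [lexEnum, hbits, List.dropLast_cons_of_ne_nil hne, List.reverse_cons, lexEnum]

lemma lexEnum_surjective : Function.Surjective lexEnum := by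
  intro w
  induction w using List.reverseRecOn with
  | nil => exact ⟨0, by simp [lexEnum, Nat.one_bits]⟩
  | append_singleton w b ih =>
    obtain ⟨m, rfl⟩ := ih
    exact ⟨_, lexEnum_snoc m b⟩

lemma length_lexEnum_le (m : ℕ) : (lexEnum m).length ≤ m := by
  have : (m + 1).size ≤ m + 1 := Nat.size_le.mpr Nat.lt_two_pow_self
  simp only [lexEnum, List.length_reverse, List.length_dropLast, Nat.size_eq_bits_len]
  omega

lemma exists_prefix_lexEnum (w : List Bool) (N : ℕ) : ∃ m, N ≤ m ∧ w <+: lexEnum m := by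
  obtain ⟨m, hm⟩ := lexEnum_surjective (w ++ List.replicate N false)
  refine ⟨m, ?_, hm ▸ List.prefix_append _ _⟩
  have := congrArg List.length hm
  simp only [List.length_append, List.length_replicate] at this
  linarith [length_lexEnum_le m]

lemma psiFun_two_mul_add (m : ℕ) (b : Bool) : psiFun (2 * m + b.toNat) = lexEnum m := by
  rw [psiFun]
  congr 1
  cases b <;> simp; omega

end LexEnum

section Cylinders

variable {E F : ℕ → Type*} [∀ n, TopologicalSpace (E n)] [∀ n, DiscreteTopology (E n)]
  [∀ n, TopologicalSpace (F n)] [∀ n, DiscreteTopology (F n)]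

lemma exists_cylinder_subset {U : Set (∀ n, E n)} (hU : IsOpen U) {x : ∀ n, E n} (hx : x ∈ U) :
    ∃ M, cylinder x M ⊆ U := by
  obtain ⟨_, ⟨y, M, rfl⟩, hxy, hyU⟩ :=
    (isTopologicalBasis_cylinders E).exists_subset_of_mem_open hx hU
  exact ⟨M, (mem_cylinder_iff_eq.mp hxy).symm ▸ hyU⟩

lemma exists_cylinder_prod_subset {W : Set ((∀ n, E n) × (∀ n, F n))} (hW : IsOpen W)
    {p : (∀ n, E n) × (∀ n, F n)} (hp : p ∈ W) : ∃ M, cylinder p.1 M ×ˢ cylinder p.2 M ⊆ W := by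
  obtain ⟨U, V, hU, hV, hpU, hpV, hUV⟩ := isOpen_prod_iff.mp hW p.1 p.2 hp
  obtain ⟨M₁, hM₁⟩ := exists_cylinder_subset hU hpU
  obtain ⟨M₂, hM₂⟩ := exists_cylinder_subset hV hpV
  refine ⟨max M₁ M₂, Set.Subset.trans (Set.prod_mono ?_ ?_) hUV⟩
  exacts [(cylinder_anti _ (le_max_left _ _)).trans hM₁,
    (cylinder_anti _ (le_max_right _ _)).trans hM₂]

end Cylinders

section AppendSeq

lemma appendSeq_of_lt {u : List Bool} (γ : Cantor) {k : ℕ} (h : k < u.length) :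
    appendSeq u γ k = u.getD k false := if_pos h

lemma appendSeq_of_le {u : List Bool} (γ : Cantor) {k : ℕ} (h : u.length ≤ k) :
    appendSeq u γ k = γ (k - u.length) := if_neg (by omega)

@[simp]
lemma appendSeq_nil (γ : Cantor) : appendSeq [] γ = γ := by
  funext k
  simp [appendSeq]

lemma appendSeq_append (u v : List Bool) (γ : Cantor) :
    appendSeq (u ++ v) γ = appendSeq u (appendSeq v γ) := by
  funext k
  rcases lt_or_ge k u.length with h₁ | h₁
  · rw [appendSeq_of_lt _ (by simp only [List.length_append]; omega), appendSeq_of_lt _ h₁,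
      List.getD_append _ _ _ _ h₁]
  rcases lt_or_ge k (u.length + v.length) with h₂ | h₂
  · rw [appendSeq_of_lt _ (by simp only [List.length_append]; omega), appendSeq_of_le _ h₁,
      appendSeq_of_lt _ (by omega), List.getD_append_right _ _ _ _ h₁]
  · rw [appendSeq_of_le _ (by simp only [List.length_append]; omega), appendSeq_of_le _ h₁,
      appendSeq_of_le _ (by omega)]
    simp only [List.length_append, Nat.sub_sub]

lemma appendSeq_mem_cylinder {γ γ₀ : Cantor} {M : ℕ} (h : γ ∈ cylinder γ₀ M) (u : List Bool) :
    appendSeq u γ ∈ cylinder (appendSeq u γ₀) M := by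
  intro k hk
  rcases lt_or_ge k u.length with h₁ | h₁
  · rw [appendSeq_of_lt _ h₁, appendSeq_of_lt _ h₁]
  · rw [appendSeq_of_le _ h₁, appendSeq_of_le _ h₁, h _ (by omega)]

lemma appendSeq_mem_cylinder_of_prefix {γ₀ : Cantor} {M : ℕ} {v : List Bool}
    (h : listInit γ₀ M <+: v) (γ : Cantor) : appendSeq v γ ∈ cylinder γ₀ M := by
  intro k hk
  have hkM : k < (listInit γ₀ M).length := by simpa [listInit] using hk
  obtain ⟨t, rfl⟩ := h
  rw [appendSeq_of_lt _ (by simp only [List.length_append]; omega), List.getD_append _ _ _ _ hkM,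
    List.getD_eq_getElem _ _ hkM]
  simp [listInit]

lemma continuous_appendSeq (u : List Bool) : Continuous (appendSeq u) := by
  refine continuous_pi fun k => ?_
  rcases lt_or_ge k u.length with h | h
  · simp only [appendSeq, if_pos h]
    exact continuous_const
  · simp only [appendSeq, if_neg (not_lt.mpr h)]
    exact continuous_apply _

lemma isOpenEmbedding_appendSeq (u : List Bool) : IsOpenEmbedding (appendSeq u) := by
  let drop : Cantor → Cantor := fun β k => β (k + u.length)
  have hleft : Function.LeftInverse drop (appendSeq u) := fun γ => by
    funext k
    simp [drop, appendSeq_of_le γ (Nat.le_add_left u.length k)]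
  have hrange : Set.range (appendSeq u) = cylinder (appendSeq u fun _ => false) u.length := by
    ext β
    refine ⟨?_, fun hβ => ⟨drop β, ?_⟩⟩
    · rintro ⟨γ, rfl⟩ k hk
      rw [appendSeq_of_lt _ hk, appendSeq_of_lt _ hk]
    · funext k
      rcases lt_or_ge k u.length with h | h
      · rw [appendSeq_of_lt _ h, hβ k h, appendSeq_of_lt _ h]
      · simp [drop, appendSeq_of_le _ h, Nat.sub_add_cancel h]
  refine ⟨hleft.isEmbedding (continuous_pi fun k => continuous_apply _) (continuous_appendSeq u),
    ?_⟩
  rw [hrange]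
  exact isOpen_cylinder _ _ _

lemma preimage_appendSeq_mem_residual (u : List Bool) {G : Set Cantor}
    (hG : G ∈ residual Cantor) : appendSeq u ⁻¹' G ∈ residual Cantor :=
  tendsto_residual_of_isOpenMap (continuous_appendSeq u) (isOpenEmbedding_appendSeq u).isOpenMap hG
end AppendSeq

section TreePairs

variable {η θ ρ : Ordinal.{0}} {φ : List ℕ → Option Ordinal.{0}}

lemma tSeq_snoc (φ : List ℕ → Option Ordinal.{0}) (ε : Bool) (s : List ℕ) (n : ℕ) :
    tSeq φ ε (s ++ [n]) = tSeq φ ε s ++ (psiFun n ++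
      (List.replicate (cEnum φ (s ++ [n]) - cEnum φ s - (psiFun n).length - 1) false ++ [ε])) := by
  simp [tSeq, tAux, List.append_assoc]

@[simp]
lemma tSeq_nil (ε : Bool) : tSeq φ ε [] = [] := rfl

lemma appendSeq_tSeq_snoc_mem_cylinder {γ₀ : Cantor} {M n : ℕ} (h : listInit γ₀ M <+: psiFun n)
    (ε : Bool) (s : List ℕ) (γ : Cantor) :
    appendSeq (tSeq φ ε (s ++ [n])) γ ∈ cylinder (appendSeq (tSeq φ ε s) γ₀) M := by
  rw [tSeq_snoc, appendSeq_append, appendSeq_append]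
  exact appendSeq_mem_cylinder (appendSeq_mem_cylinder_of_prefix h _) _

lemma appendSeq_tSeq_snoc_mem {C : Set Cantor} {ε : Bool} {s : List ℕ}
    (hC : ∀ γ, appendSeq (tSeq φ ε s) γ ∈ C) (n : ℕ) (γ : Cantor) :
    appendSeq (tSeq φ ε (s ++ [n])) γ ∈ C := by
  rw [tSeq_snoc, appendSeq_append]
  exact hC _

noncomputable def tPair (φ : List ℕ → Option Ordinal.{0}) (s : List ℕ) (γ : Cantor) :
    Cantor × Cantor :=
  (appendSeq (tSeq φ false s) γ, appendSeq (tSeq φ true s) γ)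

def side (s : List ℕ) : Bool := decide (Even (s.length + s.headD 0))

lemma tPair_mem_SSset {s : List ℕ} (hs : s ≠ []) (hφs : φ s ≠ none) (γ : Cantor) :
    tPair φ s γ ∈ SSset φ (side s) := by
  refine ⟨s, γ, hφs, hs, ?_, rfl, rfl⟩
  rw [side, decide_eq_false_iff_not, Nat.even_add]
  tauto

lemma side_snoc {s : List ℕ} (hs : s ≠ []) (n : ℕ) : side (s ++ [n]) = !side s := by
  have hlen : (s ++ [n]).length + (s ++ [n]).headD 0 = s.length + s.headD 0 + 1 := by
    obtain ⟨a, r, rfl⟩ := List.exists_cons_of_ne_nil hs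
    simp only [List.cons_append, List.length_cons, List.length_append, List.headD_cons,
      List.length_nil]
    omega
  simp only [side, hlen, Nat.even_add_one, decide_not]

lemma side_singleton {n : ℕ} {b : Bool} (h : n % 2 = b.toNat) : side [n] = b := by
  cases b <;> simp [side, Nat.even_iff] at h ⊢ <;> omega

lemma exists_child (hφ : PhiSpec η φ) {s : List ℕ} (hs : φ s = some ρ) (hθ : θ < ρ)
    (w : List Bool) (b : Bool) :
    ∃ n ρ', φ (s ++ [n]) = some ρ' ∧ θ ≤ ρ' ∧ w <+: psiFun n ∧ n % 2 = b.toNat := by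
  rcases Ordinal.zero_or_succ_or_isSuccLimit ρ with rfl | ⟨χ, rfl⟩ | hlim
  · exact absurd hθ (not_lt_zero (a := θ))
  · obtain ⟨m, -, hm⟩ := exists_prefix_lexEnum w 0
    refine ⟨2 * m + b.toNat, χ, hφ.2.2.2.2.1 s χ _ (by rwa [← Order.succ_eq_add_one]),
      Order.lt_succ_iff.mp hθ, psiFun_two_mul_add m b ▸ hm, by cases b <;> simp⟩
  · obtain ⟨θf, hθf, hmono, -, hcof⟩ := hφ.2.2.2.2.2 s ρ hs hlim
    obtain ⟨N, hN⟩ := hcof θ hθ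
    obtain ⟨m, hNm, hm⟩ := exists_prefix_lexEnum w N
    refine ⟨2 * m + b.toNat, θf _, hθf _, hN.trans (hmono.monotone (by omega)),
      psiFun_two_mul_add m b ▸ hm, by cases b <;> simp⟩

lemma exists_generic_tPair_mem_cylinder {G : Set Cantor} (hG : G ∈ residual Cantor)
    (s : List ℕ) (γ₀ : Cantor) (M : ℕ) :
    ∃ γ ∈ cylinder γ₀ M, tPair φ s γ ∈ G ×ˢ G := by
  have hgen : {γ | tPair φ s γ ∈ G ×ˢ G} ∈ residual Cantor :=
    Filter.inter_mem (preimage_appendSeq_mem_residual _ hG) (preimage_appendSeq_mem_residual _ hG)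
  obtain ⟨γ, hγ, hγG⟩ := (dense_of_mem_residual hgen).inter_open_nonempty _
    (isOpen_cylinder _ γ₀ M) ⟨γ₀, self_mem_cylinder γ₀ M⟩
  exact ⟨γ, hγ, hγG⟩

end TreePairs

section Localization

lemma baireMeasurableSet_of_isOpen_of_le {X : Type} {σ : TopologicalSpace X}
    [tX : TopologicalSpace X] [hX : PolishSpace X] (hσ : PolishSpace (h := σ)) (hle : σ ≤ tX)
    {V : Set X} (hV : IsOpen[σ] V) : BaireMeasurableSet V := by
  borelize X
  have hVσ : @MeasurableSet X (@borel X σ) V := MeasurableSpace.measurableSet_generateFrom hV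
  rw [MeasureTheory.borel_eq_borel_of_le hσ hX hle] at hVσ
  exact hVσ.baireMeasurableSet

lemma exists_residual_isOpen_eq_of_le {X : Type} {σ : TopologicalSpace X}
    [tX : TopologicalSpace X] [PolishSpace X] (hσ : PolishSpace (h := σ)) (hle : σ ≤ tX) :
    ∃ G ∈ residual X, ∃ tr : Set X → Set X, (∀ V, IsOpen (tr V)) ∧
      ∃ b : Set (Set X), TopologicalSpace.IsTopologicalBasis (t := σ) b ∧
        ∀ V ∈ b, V ∩ G = tr V ∩ G := by
  obtain ⟨b, hbc, -, hb⟩ :=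
    @TopologicalSpace.exists_countable_basis X σ hσ.toSecondCountableTopology
  have happrox : ∀ V, ∃ U, IsOpen U ∧ (V ∈ b → V =ᶠ[residual X] U) := fun V => by
    by_cases hV : V ∈ b
    · obtain ⟨U, hU, hVU⟩ :=
        (baireMeasurableSet_of_isOpen_of_le hσ hle
          (@TopologicalSpace.IsTopologicalBasis.isOpen X σ V b hb hV)).residualEq_isOpen
      exact ⟨U, hU, fun _ => hVU⟩
    · exact ⟨∅, isOpen_empty, fun h => absurd h hV⟩
  choose tr htr hVtr using happrox
  refine ⟨{x | ∀ V ∈ b, V x = tr V x}, (eventually_countable_ball hbc).2 fun V hV => hVtr V hV,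
    tr, htr, b, hb, fun V hV => ?_⟩
  ext x
  simp only [Set.mem_inter_iff, Set.mem_ofPred_eq]
  exact ⟨fun ⟨hx, hG⟩ => ⟨(hG V hV).mp hx, hG⟩, fun ⟨hx, hG⟩ => ⟨(hG V hV).mpr hx, hG⟩⟩

theorem exists_residual_prod_isOpen_inter_eq {X Y : Type} {σ : TopologicalSpace X}
    {τ : TopologicalSpace Y} [tX : TopologicalSpace X] [PolishSpace X] [tY : TopologicalSpace Y]
    [PolishSpace Y] (hσ : PolishSpace (h := σ)) (hτ : PolishSpace (h := τ)) (hσle : σ ≤ tX)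
    (hτle : τ ≤ tY) :
    ∃ G ∈ residual X, ∃ H ∈ residual Y, ∃ tr : Set (X × Y) → Set (X × Y),
      (∀ F, IsOpen (tr F)) ∧ ∀ F, IsOpen[@instTopologicalSpaceProd X Y σ τ] F →
        F ∩ G ×ˢ H = tr F ∩ G ×ˢ H := by
  obtain ⟨G, hG, trX, htrX, bX, hbX, hbXG⟩ := exists_residual_isOpen_eq_of_le hσ hσle
  obtain ⟨H, hH, trY, htrY, bY, hbY, hbYH⟩ := exists_residual_isOpen_eq_of_le hτ hτle
  refine ⟨G, hG, H, hH, fun F => ⋃ V ∈ bX, ⋃ W ∈ bY, ⋃ (_ : V ×ˢ W ⊆ F), trX V ×ˢ trY W,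
    fun F => isOpen_biUnion fun V _ => isOpen_biUnion fun W _ =>
      isOpen_iUnion fun _ => (htrX V).prod (htrY W), fun F hF => ?_⟩
  have hbox : ∀ V ∈ bX, ∀ W ∈ bY, V ×ˢ W ∩ G ×ˢ H = trX V ×ˢ trY W ∩ G ×ˢ H :=
    fun V hV W hW => by rw [Set.prod_inter_prod, Set.prod_inter_prod, hbXG V hV, hbYH W hW]
  ext p
  simp only [Set.mem_inter_iff, Set.mem_iUnion, exists_prop]
  constructor
  · rintro ⟨hpF, hpGH⟩
    obtain ⟨_, ⟨V, hV, W, hW, rfl⟩, hpVW, hVW⟩ :=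
      @TopologicalSpace.IsTopologicalBasis.exists_subset_of_mem_open (X × Y)
        (@instTopologicalSpaceProd X Y σ τ) _
        (@TopologicalSpace.IsTopologicalBasis.prod X Y σ τ bX bY hbX hbY) p F hpF hF
    exact ⟨⟨V, hV, W, hW, hVW, ((Set.ext_iff.mp (hbox V hV W hW) p).mp ⟨hpVW, hpGH⟩).1⟩, hpGH⟩
  · rintro ⟨⟨V, hV, W, hW, hVW, hp⟩, hpGH⟩
    exact ⟨hVW ((Set.ext_iff.mp (hbox V hV W hW) p).mpr ⟨hp, hpGH⟩).1, hpGH⟩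

end Localization

section DiffSet

variable {Z : Type} {η θ : Ordinal.{0}} {O O' : Ordinal.{0} → Set Z} {x : Z}

lemma mem_diffSet_congr (h : ∀ θ < η, x ∈ O θ ↔ x ∈ O' θ) :
    x ∈ DiffSet η O ↔ x ∈ DiffSet η O' := by
  simp only [DiffSet, Set.mem_ofPred_eq]
  refine exists_congr fun θ => ⟨?_, ?_⟩ <;> rintro ⟨hθ, hpar, hx, hmin⟩
  · exact ⟨hθ, hpar, (h θ hθ).mp hx, fun θ' hθ' => (h θ' (hθ'.trans hθ)).not.mp (hmin θ' hθ')⟩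
  · exact ⟨hθ, hpar, (h θ hθ).mpr hx, fun θ' hθ' => (h θ' (hθ'.trans hθ)).not.mpr (hmin θ' hθ')⟩

lemma mem_diffSet_iff_of_minimal (hθ : θ < η) (hx : x ∈ O θ) (hmin : ∀ θ' < θ, x ∉ O θ') :
    x ∈ DiffSet η O ↔ (OrdEven θ ↔ ¬ OrdEven η) := by
  refine ⟨fun ⟨θ₁, _, hpar, hx₁, hmin₁⟩ => ?_, fun hpar => ⟨θ, hθ, hpar, hx, hmin⟩⟩
  rcases lt_trichotomy θ₁ θ with h | rfl | h
  · exact absurd hx₁ (hmin θ₁ h)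
  · exact hpar
  · exact absurd hx (hmin₁ θ h)

end DiffSet

section Core

variable {η θ : Ordinal.{0}} {φ : List ℕ → Option Ordinal.{0}} {C G : Set Cantor}
  {U : Bool → Ordinal.{0} → Set (Cantor × Cantor)}

/-- On generic points of `C²`, the difference sets of `U true` and `U false` tell whether a pair
of the tree lies in `𝕊^η_0` or in `𝕊^η_1`. -/
def DetectsSide (η : Ordinal.{0}) (φ : List ℕ → Option Ordinal.{0}) (C G : Set Cantor)
    (U : Bool → Ordinal.{0} → Set (Cantor × Cantor)) : Prop :=
  ∀ s γ b, s ≠ [] → φ s ≠ none → tPair φ s γ ∈ (C ∩ G) ×ˢ (C ∩ G) →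
    (tPair φ s γ ∈ DiffSet η (U b) ↔ side s ≠ b)

lemma detectsSide_of_separates {S : Set (Cantor × Cantor)}
    (hAS : SSset φ false ∩ C ×ˢ C ⊆ S) (hSB : Disjoint S (SSset φ true ∩ C ×ˢ C))
    (hSU : ∀ b, ∀ p ∈ G ×ˢ G, p ∈ DiffSet η (U b) ↔ (p ∈ S ↔ b = true)) :
    DetectsSide η φ C G U := by
  rintro s γ b hs hφs ⟨⟨hC₁, hG₁⟩, hC₂, hG₂⟩
  have hmem := tPair_mem_SSset hs hφs γ
  have hS : tPair φ s γ ∈ S ↔ side s = false := by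
    cases h : side s
    · exact iff_of_true (hAS ⟨h ▸ hmem, hC₁, hC₂⟩) rfl
    · exact iff_of_false (fun hS => hSB.ne_of_mem hS ⟨h ▸ hmem, hC₁, hC₂⟩ rfl) (by decide)
  rw [hSU b _ ⟨hG₁, hG₂⟩, hS]
  cases side s <;> cases b <;> decide

lemma DetectsSide.parity_iff (hdet : DetectsSide η φ C G U) {s : List ℕ} {γ : Cantor} {b : Bool}
    (hs : s ≠ []) (hφs : φ s ≠ none) (hp : tPair φ s γ ∈ (C ∩ G) ×ˢ (C ∩ G)) (hθ : θ < η)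
    (hmem : tPair φ s γ ∈ U b θ) (hmin : ∀ θ' < θ, tPair φ s γ ∉ U b θ') :
    (OrdEven θ ↔ ¬ OrdEven η) ↔ side s ≠ b :=
  (mem_diffSet_iff_of_minimal hθ hmem hmin).symm.trans (hdet s γ b hs hφs hp)

/-- By induction, a generic pair at `s` in `U b θ` has least level `θ`, and so has a generic pair
at a child of `s` close to it; the two lie on different sides, giving `θ` two parities. -/
lemma DetectsSide.tPair_not_mem (hdet : DetectsSide η φ C G U) (hφ : PhiSpec η φ)
    (hG : G ∈ residual Cantor) (hU : ∀ b θ, IsOpen (U b θ)) (θ : Ordinal.{0}) :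
    ∀ {s ρ}, s ≠ [] → φ s = some ρ → θ < ρ → (∀ ε γ, appendSeq (tSeq φ ε s) γ ∈ C) →
      ∀ b γ, tPair φ s γ ∉ U b θ := by
  induction θ using WellFoundedLT.induction with | _ θ IH =>
  intro s ρ hs hφs hθρ hsC b γ₀ hγ₀
  have hθη : θ < η := hθρ.trans_le (hφ.2.1 s ρ hφs)
  have hlevel : ∀ {s' ρ'}, s' ≠ [] → φ s' = some ρ' → θ ≤ ρ' →
      (∀ ε γ, appendSeq (tSeq φ ε s') γ ∈ C) → ∀ γ, tPair φ s' γ ∈ G ×ˢ G →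
        tPair φ s' γ ∈ U b θ → ((OrdEven θ ↔ ¬ OrdEven η) ↔ side s' ≠ b) :=
    fun hs' hφs' hθρ' hs'C γ hγG hγU => hdet.parity_iff hs' (by simp [hφs'])
      ⟨⟨hs'C false γ, hγG.1⟩, hs'C true γ, hγG.2⟩ hθη hγU
      fun θ' hθ' => IH θ' hθ' hs' hφs' (hθ'.trans_le hθρ') hs'C b γ
  obtain ⟨M, hM⟩ := exists_cylinder_prod_subset (hU b θ) hγ₀
  obtain ⟨n, ρ', hφn, hθρ', hpre, -⟩ := exists_child hφ hφs hθρ (listInit γ₀ M) false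
  obtain ⟨γ, hγ, hγG⟩ := exists_generic_tPair_mem_cylinder (φ := φ) hG s γ₀ M
  obtain ⟨γ', -, hγ'G⟩ := exists_generic_tPair_mem_cylinder (φ := φ) hG (s ++ [n]) γ₀ M
  have hnode := hlevel hs hφs hθρ.le hsC γ hγG
    (hM ⟨appendSeq_mem_cylinder hγ _, appendSeq_mem_cylinder hγ _⟩)
  have hchild := hlevel (by simp) hφn hθρ' (fun ε => appendSeq_tSeq_snoc_mem (hsC ε) n) γ' hγ'G
    (hM ⟨appendSeq_tSeq_snoc_mem_cylinder hpre false s γ',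
      appendSeq_tSeq_snoc_mem_cylinder hpre true s γ'⟩)
  have hsides := hnode.symm.trans hchild
  rw [side_snoc hs] at hsides
  cases side s <;> cases b <;> simp at hsides

/-- If `(x, x)` has least level `θ` in `U b`, so has a generic pair close to it at a child `[n]`
of the root chosen with side `b`, which contradicts the parity of `θ`. -/
lemma DetectsSide.diag_not_mem_diffSet (hdet : DetectsSide η φ C G U) (hφ : PhiSpec η φ)
    (hC : IsOpen C) (hG : G ∈ residual Cantor) (hU : ∀ b θ, IsOpen (U b θ)) {x : Cantor}
    (hx : x ∈ C ∩ G) (b : Bool) : (x, x) ∉ DiffSet η (U b) := by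
  rintro ⟨θ, hθη, hpar, hxU, -⟩
  obtain ⟨M, hM⟩ := exists_cylinder_prod_subset ((hU b θ).inter (hC.prod hC)) ⟨hxU, hx.1, hx.1⟩
  obtain ⟨n, ρ, hφn, hθρ, hpre, hn⟩ := exists_child hφ hφ.1 hθη (listInit x M) b
  rw [List.nil_append] at hφn
  have hcyl : ∀ ε γ, appendSeq (tSeq φ ε [n]) γ ∈ cylinder x M := fun ε γ => by
    simpa using appendSeq_tSeq_snoc_mem_cylinder (φ := φ) hpre ε [] γ
  have hbox : ∀ γ γ', (appendSeq (tSeq φ false [n]) γ, appendSeq (tSeq φ true [n]) γ') ∈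
      U b θ ∩ C ×ˢ C := fun γ γ' => hM ⟨hcyl false γ, hcyl true γ'⟩
  have hnC : ∀ ε γ, appendSeq (tSeq φ ε [n]) γ ∈ C := fun ε γ => by
    cases ε
    exacts [(hbox γ γ).2.1, (hbox γ γ).2.2]
  obtain ⟨γ, -, hγG⟩ := exists_generic_tPair_mem_cylinder (φ := φ) hG [n] x M
  have hparity := hdet.parity_iff (List.cons_ne_nil _ _) (by simp [hφn])
    ⟨⟨hnC false γ, hγG.1⟩, hnC true γ, hγG.2⟩ hθη (hbox γ γ).1
    fun θ' hθ' => hdet.tPair_not_mem hφ hG hU θ' (List.cons_ne_nil _ _) hφn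
      (hθ'.trans_le hθρ) hnC b γ
  rw [side_singleton hn] at hparity
  exact hparity.mp hpar rfl

theorem false_of_separates_of_isOpen_on_residual (hφ : PhiSpec η φ) (hC : IsOpen C)
    (hCne : C.Nonempty) (hG : G ∈ residual Cantor) (hU : ∀ b θ, IsOpen (U b θ))
    {S : Set (Cantor × Cantor)} (hAS : SSset φ false ∩ C ×ˢ C ⊆ S)
    (hSB : Disjoint S (SSset φ true ∩ C ×ˢ C)) {O : Bool → Ordinal.{0} → Set (Cantor × Cantor)}
    (hSO : S = DiffSet η (O true)) (hSO' : Sᶜ = DiffSet η (O false))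
    (hOU : ∀ b, ∀ θ < η, ∀ p ∈ G ×ˢ G, p ∈ O b θ ↔ p ∈ U b θ) : False := by
  have hSU : ∀ b, ∀ p ∈ G ×ˢ G, p ∈ DiffSet η (U b) ↔ (p ∈ S ↔ b = true) := by
    intro b p hp
    rw [← mem_diffSet_congr fun θ hθ => hOU b θ hθ p hp]
    cases b
    · simp [← hSO']
    · simp [← hSO]
  obtain ⟨x, hx⟩ := (dense_of_mem_residual hG).inter_open_nonempty C hC hCne
  have hdiag := (detectsSide_of_separates hAS hSB hSU).diag_not_mem_diffSet hφ hC hG hU hx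
  by_cases hxS : (x, x) ∈ S
  · exact hdiag true ((hSU true _ ⟨hx.2, hx.2⟩).mpr (iff_of_true hxS rfl))
  · exact hdiag false ((hSU false _ ⟨hx.2, hx.2⟩).mpr (iff_of_false hxS (by decide)))

end Core

-- Instance search does not reach this through the product instances.
instance : PolishSpace Cantor := {}

theorem statement13_general (η : Ordinal.{0})
    (φ : List ℕ → Option Ordinal.{0}) (hφ : PhiSpec η φ)
    (C : Set Cantor) (hne : C.Nonempty) (hcl : IsClopen C) :
    ¬ SepPot (interClass (DClass η openClass) (dualClass (DClass η openClass)))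
        (SSset φ false ∩ C ×ˢ C) (SSset φ true ∩ C ×ˢ C) := by
  -- Taken before the finer topologies enter the context as local instances.
  have hC : IsOpen C := hcl.isOpen
  rintro ⟨S, ⟨σ, τ, hσle, hτle, hσ, hτ, ⟨O, hO, -, hSO⟩, O', hO', -, hSO'⟩, hAS, hSB⟩
  obtain ⟨G, hG, H, hH, tr, htr, htrF⟩ := exists_residual_prod_isOpen_inter_eq
    (tX := Pi.topologicalSpace) (tY := Pi.topologicalSpace) hσ hτ hσle hτle
  have hopen : ∀ b, ∀ θ < η,
      IsOpen[@instTopologicalSpaceProd Cantor Cantor σ τ] (cond b O O' θ) := by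
    rintro (_ | _) θ hθ
    exacts [hO' θ hθ, hO θ hθ]
  refine false_of_separates_of_isOpen_on_residual hφ hC hne (Filter.inter_mem hG hH)
    (fun b θ => htr (cond b O O' θ)) hAS hSB (O := fun b => cond b O O')
    hSO hSO' fun b θ hθ p hp => ?_
  have hpGH : p ∈ G ×ˢ H := ⟨hp.1.1, hp.2.2⟩
  exact ⟨fun h => ((htrF _ (hopen b θ hθ)).subset ⟨h, hpGH⟩).1,
    fun h => ((htrF _ (hopen b θ hθ)).symm.subset ⟨h, hpGH⟩).1⟩

/-- for `η ≥ 1` countable and a nonempty clopen `C ⊆ 2^ω`, `𝕊^η_0 ∩ C²` is not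
separable from `𝕊^η_1 ∩ C²` by a `pot(Δ(D_η(Σ^0_1)))` set. -/
theorem statement13 (η : Ordinal.{0}) (hη : 1 ≤ η) (hcount : η.card ≤ Cardinal.aleph0)
    (φ : List ℕ → Option Ordinal.{0}) (hφ : PhiSpec η φ)
    (C : Set Cantor) (hne : C.Nonempty) (hcl : IsClopen C) :
    ¬ SepPot (interClass (DClass η openClass) (dualClass (DClass η openClass)))
        (SSset φ false ∩ C ×ˢ C) (SSset φ true ∩ C ×ˢ C) :=
  statement13_general η φ hφ C hne hcl
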